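/- arXiv:1107.5829 — 5 statements merged into one kernel-verified Lean document; each statement's English description precedes it below -/
import Mathlib

section
/- For all positive integers n and all positive reals k, ∏_{j=1}^{n} (1 + k/j) ≤ (k+1)·n^k. -/
/-!
For `a, b > 0` and `k ≥ 0`, `(b/a)^k = exp (k log (b/a)) ≥ 1 + k log (b/a) ≥ 1 + k (1 - a/b)`.
With `a = m`, `b = m + 1` this says that multiplying the product by the next factor
`1 + k/(m+1)` keeps it below `(k+1) (m+1)^k`, so the bound follows by induction from `n = 1`.
-/

open Real

theorem one_add_mul_one_sub_div_mul_rpow_le {a b k : ℝ} (ha : 0 < a) (hb : 0 < b) (hk : 0 ≤ k) :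
    (1 + k * (1 - a / b)) * a ^ k ≤ b ^ k := by
  have hratio : 1 + k * (1 - a / b) ≤ (b / a) ^ k :=
    calc 1 + k * (1 - a / b) = 1 + k * (1 - (b / a)⁻¹) := by rw [inv_div]
      _ ≤ 1 + k * log (b / a) := by gcongr; exact one_sub_inv_le_log_of_pos (by positivity)
      _ ≤ exp (log (b / a) * k) := by linarith [add_one_le_exp (log (b / a) * k)]
      _ = (b / a) ^ k := (rpow_def_of_pos (by positivity) k).symm
  calc (1 + k * (1 - a / b)) * a ^ k ≤ (b / a) ^ k * a ^ k := by gcongr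
    _ = b ^ k := by rw [div_rpow hb.le ha.le, div_mul_cancel₀ _ (rpow_pos_of_pos ha k).ne']

theorem one_add_div_succ_mul_rpow_le {m : ℕ} (hm : 1 ≤ m) {k : ℝ} (hk : 0 ≤ k) :
    (1 + k / ((m : ℝ) + 1)) * (m : ℝ) ^ k ≤ ((m : ℝ) + 1) ^ k := by
  have hm' : (0 : ℝ) < m := by exact_mod_cast hm
  have hfrac : 1 - (m : ℝ) / (m + 1) = 1 / (m + 1) := by field_simp; ring
  rw [← mul_one_div, ← hfrac]
  exact one_add_mul_one_sub_div_mul_rpow_le hm' (by positivity : (0 : ℝ) < m + 1) hk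

theorem prod_one_add_div_le (n : ℕ) (hn : 1 ≤ n) (k : ℝ) (hk : 0 < k) :
    ∏ j ∈ Finset.Icc 1 n, (1 + k / (j : ℝ)) ≤ (k + 1) * (n : ℝ) ^ k := by
  induction n, hn using Nat.le_induction with
  | base => simp [add_comm]
  | succ m hm ih =>
    rw [Finset.prod_Icc_succ_top (by omega)]
    push_cast
    calc (∏ j ∈ Finset.Icc 1 m, (1 + k / (j : ℝ))) * (1 + k / ((m : ℝ) + 1))
        ≤ (k + 1) * (m : ℝ) ^ k * (1 + k / ((m : ℝ) + 1)) := by gcongr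
      _ = (k + 1) * ((1 + k / ((m : ℝ) + 1)) * (m : ℝ) ^ k) := by ring
      _ ≤ (k + 1) * ((m : ℝ) + 1) ^ k := by
        gcongr
        exact one_add_div_succ_mul_rpow_le hm hk.le
end

section
/- Let n = S₀ > S₁ > ⋯ > S_k = m be a strictly decreasing sequence of positive integers with S_{j+1} ≥ S_j/2 for all j. Define f(S₀,…,S_k) = ∏_{j=0}^{k−1}(1 + (S_j − S_{j+1})/S_j). Then f is maximized (over all such sequences from n to m) by the sequence n, n−1, n−2, …, m, i.e. f(S₀,…,S_k) ≤ ∏_{j=m}^{n-1}(1 + 1/(j+1)). -/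
lemma tele_prod (g : ℕ → ℝ) (hg : ∀ j, 0 < g j) (k : ℕ) :
    ∏ j ∈ Finset.range k, g j / g (j + 1) = g 0 / g k := by
  induction k with
  | zero => simp [div_self (hg 0).ne']
  | succ k ih =>
    rw [Finset.prod_range_succ, ih]
    have h1 := (hg k).ne'
    have h2 := (hg (k + 1)).ne'
    field_simp

lemma rhs_prod (m n : ℕ) (h : m ≤ n) :
    ∏ j ∈ Finset.Ico m n, (1 + 1 / ((j : ℝ) + 1)) = ((n : ℝ) + 1) / ((m : ℝ) + 1) := by
  induction n, h using Nat.le_induction with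
  | base =>
    have : ((m : ℝ) + 1) ≠ 0 := by positivity
    simp [div_self this]
  | succ n hmn ih =>
    rw [Finset.prod_Ico_succ_top hmn, ih]
    have h1 : ((n : ℝ) + 1) ≠ 0 := by positivity
    have h2 : ((m : ℝ) + 1) ≠ 0 := by positivity
    push_cast
    field_simp

theorem halving_sequence_product_max
    (n m k : ℕ) (hm : 1 ≤ m) (hmn : m < n) (hk : 1 ≤ k)
    (S : ℕ → ℕ)
    (h0 : S 0 = n) (hend : S k = m)
    (hdec : ∀ j < k, S (j + 1) < S j)
    (hhalf : ∀ j < k, S j ≤ 2 * S (j + 1)) :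
    ∏ j ∈ Finset.range k, (1 + ((S j : ℝ) - (S (j + 1) : ℝ)) / (S j : ℝ)) ≤
      ∏ j ∈ Finset.Ico m n, (1 + 1 / ((j : ℝ) + 1)) := by
  have hpos : ∀ j ≤ k, 1 ≤ S j := by
    intro j hj
    rcases lt_or_eq_of_le hj with h | h
    · have := hdec j h
      omega
    · rw [h, hend]; exact hm
  -- each factor bounded by telescoping factor
  have hfac : ∀ j < k,
      (1 + ((S j : ℝ) - (S (j + 1) : ℝ)) / (S j : ℝ)) ≤
        ((S j : ℝ) + 1) / ((S (j + 1) : ℝ) + 1) := by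
    intro j hj
    have ha : 1 ≤ S j := hpos j hj.le
    have hb : 1 ≤ S (j + 1) := hpos (j + 1) hj
    have hab : S (j + 1) + 1 ≤ S j := hdec j hj
    have hAr : (1 : ℝ) ≤ (S j : ℝ) := by exact_mod_cast ha
    have hBr : (1 : ℝ) ≤ (S (j + 1) : ℝ) := by exact_mod_cast hb
    have habr : (S (j + 1) : ℝ) + 1 ≤ (S j : ℝ) := by exact_mod_cast hab
    set a := (S j : ℝ)
    set b := (S (j + 1) : ℝ)
    have hA0 : 0 < a := by linarith
    have hB0 : 0 < b + 1 := by linarith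
    have key : 1 + (a - b) / a = (2 * a - b) / a := by field_simp; ring
    rw [key, div_le_div_iff₀ hA0 hB0]
    nlinarith [mul_nonneg (by linarith : (0:ℝ) ≤ a - b) (by linarith : (0:ℝ) ≤ a - b - 1)]
  have hnn : ∀ j ∈ Finset.range k,
      0 ≤ 1 + ((S j : ℝ) - (S (j + 1) : ℝ)) / (S j : ℝ) := by
    intro j hj
    rw [Finset.mem_range] at hj
    have ha : (1 : ℝ) ≤ (S j : ℝ) := by exact_mod_cast hpos j hj.le
    have hab : (S (j + 1) : ℝ) ≤ (S j : ℝ) := by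
      exact_mod_cast (hdec j hj).le
    have : 0 ≤ ((S j : ℝ) - (S (j + 1) : ℝ)) / (S j : ℝ) :=
      div_nonneg (by linarith) (by linarith)
    linarith
  calc ∏ j ∈ Finset.range k, (1 + ((S j : ℝ) - (S (j + 1) : ℝ)) / (S j : ℝ))
      ≤ ∏ j ∈ Finset.range k, ((S j : ℝ) + 1) / ((S (j + 1) : ℝ) + 1) :=
        Finset.prod_le_prod hnn (fun j hj => hfac j (Finset.mem_range.mp hj))
    _ = ((S 0 : ℝ) + 1) / ((S k : ℝ) + 1) := by
        apply tele_prod (fun j => (S j : ℝ) + 1)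
        intro j
        positivity
    _ = ∏ j ∈ Finset.Ico m n, (1 + 1 / ((j : ℝ) + 1)) := by
        rw [h0, hend, rhs_prod m n hmn.le]
end

section
/- Let x, y ∈ ℝⁿ with Σᵢxᵢ = Σᵢyᵢ. Choose (i,j) uniformly among ordered pairs of distinct indices and λ uniform on [0,1] independently; update x'_i = λ(x_i + x_j), x'_j = (1−λ)(x_i + x_j), x'_k = x_k otherwise, and similarly for y with the same (i,j,λ). Then E[‖x' − y'‖₂²] = (1 − 2/(3(n−1)) − 2/(3n(n−1)))·‖x − y‖₂². -/
open MeasureTheory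

theorem proportional_coupling_contraction
    (n : ℕ) (hn : 2 ≤ n) (x y : Fin n → ℝ)
    (hsum : ∑ i, x i = ∑ i, y i)
    (update : (Fin n → ℝ) → Fin n → Fin n → ℝ → (Fin n → ℝ))
    (hupdate : ∀ z i j lam k, update z i j lam k =
      if k = i then lam * (z i + z j)
      else if k = j then (1 - lam) * (z i + z j) else z k) :
    (1 / ((n : ℝ) * ((n : ℝ) - 1))) *
        ∑ i, ∑ j ∈ Finset.univ.erase i,
          ∫ lam in Set.Icc (0:ℝ) 1,
            ∑ k, (update x i j lam k - update y i j lam k) ^ 2 =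
      (1 - 2 / (3 * ((n : ℝ) - 1)) - 2 / (3 * (n : ℝ) * ((n : ℝ) - 1))) *
        ∑ k, (x k - y k) ^ 2 := by
  set d : Fin n → ℝ := fun k => x k - y k with hd
  set S : ℝ := ∑ k, (d k) ^ 2 with hS
  have hD : ∑ k, d k = 0 := by
    simp only [hd, Finset.sum_sub_distrib, hsum, sub_self]
  have hint : ∀ i : Fin n, ∀ j ∈ Finset.univ.erase i,
      (∫ lam in Set.Icc (0:ℝ) 1,
        ∑ k, (update x i j lam k - update y i j lam k) ^ 2)
      = (2/3) * (d i + d j)^2 + (S - (d i)^2 - (d j)^2) := by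
    intro i j hj
    have hji : j ≠ i := (Finset.mem_erase.mp hj).1
    have key : ∀ lam : ℝ, ∑ k, (update x i j lam k - update y i j lam k) ^ 2
        = (lam^2 + (1-lam)^2) * (d i + d j)^2 + (S - (d i)^2 - (d j)^2) := by
      intro lam
      have h1 : ∀ k, (update x i j lam k - update y i j lam k)^2 =
          (if k = i then lam^2*(d i + d j)^2 else if k = j then (1-lam)^2*(d i + d j)^2
           else (d k)^2) := by
        intro k
        simp only [hupdate, hd]
        by_cases hk : k = i
        · subst hk; simp only [eq_self_iff_true, if_true]; ring
        · by_cases hk' : k = j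
          · subst hk'; simp only [if_neg hji, eq_self_iff_true, if_true]; ring
          · simp only [if_neg hk, if_neg hk']
      rw [Finset.sum_congr rfl (fun k _ => h1 k)]
      rw [← Finset.add_sum_erase Finset.univ _ (Finset.mem_univ i)]
      rw [← Finset.add_sum_erase _ _ hj]
      rw [if_pos rfl, if_neg hji, if_pos rfl]
      have hrest : ∑ k ∈ (Finset.univ.erase i).erase j,
          (if k = i then lam^2*(d i + d j)^2 else if k = j then (1-lam)^2*(d i + d j)^2
           else (d k)^2) = ∑ k ∈ (Finset.univ.erase i).erase j, (d k)^2 := by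
        apply Finset.sum_congr rfl
        intro k hk
        rw [if_neg (Finset.mem_erase.mp (Finset.mem_erase.mp hk).2).1,
          if_neg (Finset.mem_erase.mp hk).1]
      rw [hrest, Finset.sum_erase_eq_sub hj, Finset.sum_erase_eq_sub (Finset.mem_univ i)]
      rw [← hS]; ring
    simp_rw [key]
    rw [MeasureTheory.integral_Icc_eq_integral_Ioc,
      ← intervalIntegral.integral_of_le (by norm_num : (0:ℝ) ≤ 1)]
    set c : ℝ := d i + d j
    set T : ℝ := S - (d i)^2 - (d j)^2
    have h1 : IntervalIntegrable (fun lam : ℝ => 2*c^2*lam^2) volume 0 1 :=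
      (Continuous.intervalIntegrable (by continuity) _ _)
    have h2 : IntervalIntegrable (fun lam : ℝ => (-(2*c^2))*lam^1) volume 0 1 :=
      (Continuous.intervalIntegrable (by continuity) _ _)
    have h3 : IntervalIntegrable (fun lam : ℝ => c^2 + T) volume 0 1 :=
      (Continuous.intervalIntegrable (by continuity) _ _)
    have heq : ∀ lam : ℝ, (lam^2 + (1-lam)^2) * c^2 + T
        = 2*c^2*lam^2 + ((-(2*c^2))*lam^1 + (c^2+T)) := by intro lam; ring
    simp_rw [heq]
    rw [intervalIntegral.integral_add h1 (h2.add h3), intervalIntegral.integral_add h2 h3,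
      intervalIntegral.integral_const_mul, intervalIntegral.integral_const_mul,
      integral_pow, integral_pow, intervalIntegral.integral_const]
    norm_num; ring
  rw [Finset.sum_congr rfl (fun i _ => Finset.sum_congr rfl (hint i))]
  have hinner : ∀ i : Fin n, ∑ j ∈ Finset.univ.erase i,
      ((2/3) * (d i + d j)^2 + (S - (d i)^2 - (d j)^2))
      = ((n:ℝ) - 1) * S - ((n:ℝ) - 1) * (1/3) * (d i)^2 - (4/3)*(d i)^2 - (1/3)*(S - (d i)^2) := by
    intro i
    rw [Finset.sum_erase_eq_sub (Finset.mem_univ i)]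
    have expand : ∀ j : Fin n, (2/3) * (d i + d j)^2 + (S - (d i)^2 - (d j)^2)
        = ((2/3)*(d i)^2 + S - (d i)^2) + (4/3)*(d i) * d j + (-1/3) * (d j)^2 := by
      intro j; ring
    rw [Finset.sum_congr rfl (fun j _ => expand j)]
    rw [Finset.sum_add_distrib, Finset.sum_add_distrib, Finset.sum_const,
      ← Finset.mul_sum, ← Finset.mul_sum, hD, ← hS, Finset.card_univ, Fintype.card_fin]
    ring
  rw [Finset.sum_congr rfl (fun i _ => hinner i)]
  rw [Finset.sum_sub_distrib, Finset.sum_sub_distrib, Finset.sum_sub_distrib,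
    Finset.sum_const, ← Finset.mul_sum, ← Finset.mul_sum, ← Finset.mul_sum,
    Finset.sum_sub_distrib, Finset.sum_const, ← hS,
    Finset.card_univ, Fintype.card_fin, nsmul_eq_mul, nsmul_eq_mul]
  have hn0 : (n:ℝ) ≠ 0 := by positivity
  have hn1 : (n:ℝ) - 1 ≠ 0 := by
    have : (2:ℝ) ≤ (n:ℝ) := by exact_mod_cast hn
    linarith
  field_simp
  ring
end

section
/- Let p ⊆ [n] be a finite set of size P ≥ 2 and z : p → ℝ with Σ_{l∈p} z_l = 0. Let S be a uniformly random subset of p of fixed size s (1 ≤ s ≤ P−1). Then E[(Σ_{l∈S} z_l)²] = (s/P)·(1 − (s−1)/(P−1))·Σ_{l∈p} z_l². -/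
/-!
Expanding the square, `∑_S (∑_{l ∈ S} z l)² = ∑_{i,j ∈ p} N i j * z i * z j`, where `N i j` is
the number of `s`-subsets containing `{i, j}`: this is `C(P, s) * s / P` on the diagonal and
`C(P, s) * s (s - 1) / (P (P - 1))` off it. Since `∑ z = 0`, the off-diagonal sum
`∑_{i ≠ j} z i z j` equals `-∑ z l²`.
-/

open Finset

theorem Nat.descFactorial_mul_choose_sub {n k s : ℕ} (hks : k ≤ s) :
    n.descFactorial k * (n - k).choose (s - k) = n.choose s * s.descFactorial k := by
  rw [descFactorial_eq_factorial_mul_choose, descFactorial_eq_factorial_mul_choose,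
    mul_assoc, ← choose_mul hks]
  ring

namespace Finset

variable {ι : Type*} [DecidableEq ι]

/-- Stated multiplied out, so that it also covers `s < #t`, where the count is `0` but
`(#p - #t).choose (s - #t)` is not. -/
theorem descFactorial_mul_card_filter_powersetCard_subset {p t : Finset ι} (htp : t ⊆ p)
    (s : ℕ) :
    (#p).descFactorial #t * #{S ∈ p.powersetCard s | t ⊆ S} =
      (#p).choose s * s.descFactorial #t := by
  rcases le_or_gt #t s with hts | hst
  · rw [card_filter_powersetCard_subset t p s htp hts, Nat.descFactorial_mul_choose_sub hts]
  · have hnone : {S ∈ p.powersetCard s | t ⊆ S} = ∅ :=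
      filter_eq_empty_iff.mpr fun S hS htS =>
        (card_le_card htS).not_gt ((mem_powersetCard.mp hS).2 ▸ hst)
    rw [hnone, Nat.descFactorial_eq_zero_iff_lt.mpr hst, card_empty, mul_zero, mul_zero]

theorem cast_card_filter_powersetCard_pair_subset {K : Type*} [Field K] [CharZero K]
    {p : Finset ι} {i j : ι} (hi : i ∈ p) (hj : j ∈ p) (s : ℕ) :
    (#{S ∈ p.powersetCard s | {i, j} ⊆ S} : K) =
      if i = j then ((#p).choose s : K) * s / #p
      else ((#p).choose s : K) * (s * (s - 1)) / (#p * (#p - 1)) := by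
  have key := descFactorial_mul_card_filter_powersetCard_subset
    (insert_subset hi (singleton_subset_iff.mpr hj)) s
  split_ifs with hij
  · subst hij
    have hp : (#p : K) ≠ 0 := Nat.cast_ne_zero.mpr (card_ne_zero_of_mem hi)
    rw [eq_div_iff hp]
    simpa [mul_comm] using congrArg (Nat.cast : ℕ → K) key
  · have hcard : #({i, j} : Finset ι) = 2 := card_pair hij
    have h2 : 2 ≤ #p := hcard ▸ card_le_card (insert_subset hi (singleton_subset_iff.mpr hj))
    rw [← Nat.cast_descFactorial_two, ← Nat.cast_descFactorial_two,
      eq_div_iff (Nat.cast_ne_zero.mpr (Nat.descFactorial_eq_zero_iff_lt.not.mpr h2.not_gt))]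
    rw [hcard] at key
    exact_mod_cast (mul_comm _ _).trans key

theorem sum_sq_sum_eq_sum_sum_card_smul {R : Type*} [CommSemiring R]
    {p : Finset ι} {𝒮 : Finset (Finset ι)} (h𝒮 : ∀ S ∈ 𝒮, S ⊆ p) (z : ι → R) :
    ∑ S ∈ 𝒮, (∑ l ∈ S, z l) ^ 2 =
      ∑ i ∈ p, ∑ j ∈ p, #{S ∈ 𝒮 | {i, j} ⊆ S} • (z i * z j) := by
  have hsq : ∀ S ∈ 𝒮, (∑ l ∈ S, z l) ^ 2 =
      ∑ i ∈ p, ∑ j ∈ p, if {i, j} ⊆ S then z i * z j else 0 := by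
    intro S hS
    have hrestrict : ∀ f : ι → R, ∑ l ∈ S, f l = ∑ l ∈ p, if l ∈ S then f l else 0 := fun f => by
      rw [sum_ite_mem, inter_eq_right.mpr (h𝒮 S hS)]
    simp only [insert_subset_iff, singleton_subset_iff, ite_and]
    rw [sq, sum_mul_sum, hrestrict]
    refine sum_congr rfl fun i _ => ?_
    split_ifs
    · exact hrestrict _
    · exact sum_const_zero.symm
  rw [sum_congr rfl hsq, sum_comm]
  refine sum_congr rfl fun i _ => ?_
  rw [sum_comm]
  refine sum_congr rfl fun j _ => ?_
  rw [← sum_filter, sum_const]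

theorem sum_sum_ite_mul_eq {R : Type*} [CommRing R] (p : Finset ι) (z : ι → R) (a b : R) :
    ∑ i ∈ p, ∑ j ∈ p, (if i = j then a else b) * (z i * z j) =
      (a - b) * ∑ i ∈ p, z i ^ 2 + b * (∑ i ∈ p, z i) ^ 2 := by
  have hsplit : ∀ i j, (if i = j then a else b) * (z i * z j) =
      (if i = j then (a - b) * (z i * z j) else 0) + b * (z i * z j) := by
    intro i j; split_ifs <;> ring
  simp only [hsplit, sum_add_distrib, sum_ite_eq, ← mul_sum, sq, sum_mul_sum]
  rw [sum_ite_of_true fun _ hi => hi, ← mul_sum]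

end Finset

theorem random_subset_second_moment_general
    {ι : Type*} [DecidableEq ι] (p : Finset ι) (z : ι → ℝ) (P s : ℕ)
    (hP : p.card = P) (hP2 : 2 ≤ P) (hsP : s ≤ P - 1)
    (hsum : ∑ l ∈ p, z l = 0) :
    (∑ S ∈ p.powersetCard s, (∑ l ∈ S, z l) ^ 2) / (P.choose s : ℝ) =
      ((s : ℝ) / P) * (1 - ((s : ℝ) - 1) / ((P : ℝ) - 1)) * ∑ l ∈ p, z l ^ 2 := by
  subst hP
  have hchoose : ((#p).choose s : ℝ) ≠ 0 := Nat.cast_ne_zero.mpr (Nat.choose_pos (by omega)).ne'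
  have hp : (2 : ℝ) ≤ #p := by exact_mod_cast hP2
  have hp0 : (#p : ℝ) ≠ 0 := by linarith
  have hp1 : (#p : ℝ) - 1 ≠ 0 := by linarith
  have hcount : ∀ i ∈ p, ∀ j ∈ p, #{S ∈ p.powersetCard s | {i, j} ⊆ S} • (z i * z j) =
      (if i = j then ((#p).choose s : ℝ) * s / #p
        else ((#p).choose s : ℝ) * (s * (s - 1)) / (#p * (#p - 1))) * (z i * z j) :=
    fun i hi j hj => by rw [nsmul_eq_mul, cast_card_filter_powersetCard_pair_subset hi hj]
  rw [sum_sq_sum_eq_sum_sum_card_smul (fun S hS => (mem_powersetCard.mp hS).1),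
    sum_congr rfl fun i hi => sum_congr rfl (hcount i hi), sum_sum_ite_mul_eq, hsum]
  field_simp
  ring

theorem random_subset_second_moment
    {ι : Type*} [DecidableEq ι] (p : Finset ι) (z : ι → ℝ) (P s : ℕ)
    (hP : p.card = P) (hP2 : 2 ≤ P) (hs1 : 1 ≤ s) (hsP : s ≤ P - 1)
    (hsum : ∑ l ∈ p, z l = 0) :
    (∑ S ∈ p.powersetCard s, (∑ l ∈ S, z l) ^ 2) / (P.choose s : ℝ) =
      ((s : ℝ) / P) * (1 - ((s : ℝ) - 1) / ((P : ℝ) - 1)) * ∑ l ∈ p, z l ^ 2 :=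
  random_subset_second_moment_general p z P s hP hP2 hsP hsum
end

section
/- If Σ_{l∈p} z_l = 0 and S is a uniformly random size-s subset of p (|p| = P), then E[Σ_{l∈p} z_l² + (Σ_{l∈S} z_l)²] ≤ (1 + (s/P)(1 − (s−1)/(P−1)))·Σ_{l∈p} z_l² ≤ (1 + s/P)·Σ_{l∈p} z_l². -/
open Finset in
lemma count_subsets {ι : Type*} [DecidableEq ι] (p t : Finset ι) (s : ℕ)
    (ht : t ⊆ p) (hts : t.card ≤ s) :
    ((p.powersetCard s).filter (fun S => t ⊆ S)).card
      = (p.card - t.card).choose (s - t.card) := by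
  rw [← Finset.card_sdiff_of_subset ht, ← Finset.card_powersetCard]
  apply Finset.card_bij (fun S _ => S \ t)
  · intro S hS
    simp only [mem_filter, mem_powersetCard] at hS
    simp only [mem_powersetCard]
    exact ⟨sdiff_subset_sdiff hS.1.1 le_rfl, by rw [card_sdiff_of_subset hS.2, hS.1.2]⟩
  · intro S hS T hT h
    simp only [mem_filter, mem_powersetCard] at hS hT
    have := congrArg (· ∪ t) h
    simpa [Finset.sdiff_union_of_subset hS.2, Finset.sdiff_union_of_subset hT.2] using this
  · intro U hU
    simp only [mem_powersetCard] at hU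
    have hdisj : Disjoint U t := (Finset.sdiff_disjoint).mono_left hU.1
    refine ⟨U ∪ t, ?_, ?_⟩
    · simp only [mem_filter, mem_powersetCard]
      refine ⟨⟨union_subset (hU.1.trans (sdiff_subset)) ht, ?_⟩, subset_union_right⟩
      rw [card_union_of_disjoint hdisj, hU.2, Nat.sub_add_cancel hts]
    · rw [union_sdiff_right, Finset.sdiff_eq_self_of_disjoint hdisj]

open Finset in
lemma count_subsets_zero {ι : Type*} [DecidableEq ι] (p t : Finset ι) (s : ℕ)
    (hts : s < t.card) :
    ((p.powersetCard s).filter (fun S => t ⊆ S)).card = 0 := by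
  rw [Finset.card_eq_zero, Finset.filter_eq_empty_iff]
  intro S hS hts'
  simp only [mem_powersetCard] at hS
  exact absurd (Finset.card_le_card hts') (by omega)

theorem random_subset_second_moment_bound
    {ι : Type*} [DecidableEq ι] (p : Finset ι) (z : ι → ℝ) (P s : ℕ)
    (hP : p.card = P) (hP2 : 2 ≤ P) (hs1 : 1 ≤ s) (hsP : s ≤ P - 1)
    (hsum : ∑ l ∈ p, z l = 0) :
    (∑ S ∈ p.powersetCard s, ((∑ l ∈ p, z l ^ 2) + (∑ l ∈ S, z l) ^ 2)) / (P.choose s : ℝ) ≤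
        (1 + ((s : ℝ) / P) * (1 - ((s : ℝ) - 1) / ((P : ℝ) - 1))) * ∑ l ∈ p, z l ^ 2 ∧
      (1 + ((s : ℝ) / P) * (1 - ((s : ℝ) - 1) / ((P : ℝ) - 1))) * ∑ l ∈ p, z l ^ 2 ≤
        (1 + (s : ℝ) / P) * ∑ l ∈ p, z l ^ 2 := by
  classical
  have hsP' : s ≤ P := le_trans hsP (Nat.sub_le _ _)
  have hP1 : 1 ≤ P := le_trans (by norm_num) hP2
  set A : ℝ := ∑ l ∈ p, z l ^ 2 with hA
  have hA0 : 0 ≤ A := Finset.sum_nonneg fun i _ => sq_nonneg _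
  set n1 : ℕ := (P - 1).choose (s - 1) with hn1def
  set n2 : ℕ := if 2 ≤ s then (P - 2).choose (s - 2) else 0 with hn2def
  -- counting values
  have hc1 : ∀ i ∈ p, ((p.powersetCard s).filter (fun S => i ∈ S ∧ i ∈ S)).card = n1 := by
    intro i hi
    have hpred : (p.powersetCard s).filter (fun S => i ∈ S ∧ i ∈ S)
        = (p.powersetCard s).filter (fun S => ({i} : Finset ι) ⊆ S) :=
      Finset.filter_congr fun S _ => by simp [Finset.singleton_subset_iff]
    rw [hpred, count_subsets p {i} s (Finset.singleton_subset_iff.2 hi) (by simp [hs1]),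
      Finset.card_singleton, hP]
  have hc2 : ∀ i ∈ p, ∀ j ∈ p, i ≠ j →
      ((p.powersetCard s).filter (fun S => i ∈ S ∧ j ∈ S)).card = n2 := by
    intro i hi j hj hij
    have hpred : (p.powersetCard s).filter (fun S => i ∈ S ∧ j ∈ S)
        = (p.powersetCard s).filter (fun S => ({i, j} : Finset ι) ⊆ S) :=
      Finset.filter_congr fun S _ => by simp [Finset.insert_subset_iff]
    have hcard : ({i, j} : Finset ι).card = 2 := by
      rw [Finset.card_insert_of_notMem (by simp [hij]), Finset.card_singleton]
    have hsub : ({i, j} : Finset ι) ⊆ p := by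
      simp [Finset.insert_subset_iff, hi, hj]
    rw [hpred]
    by_cases h2 : 2 ≤ s
    · rw [count_subsets p {i, j} s hsub (by rw [hcard]; exact h2), hcard, hP, hn2def, if_pos h2]
    · rw [count_subsets_zero p {i, j} s (by omega), hn2def, if_neg h2]
  -- key expansion
  have key : ∑ S ∈ p.powersetCard s, (∑ l ∈ S, z l) ^ 2 = ((n1 : ℝ) - n2) * A := by
    have step1 : ∑ S ∈ p.powersetCard s, (∑ l ∈ S, z l) ^ 2
        = ∑ S ∈ p.powersetCard s, ∑ i ∈ p, ∑ j ∈ p,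
            (if i ∈ S then z i else 0) * (if j ∈ S then z j else 0) := by
      refine Finset.sum_congr rfl fun S hS => ?_
      have hSp : S ⊆ p := (Finset.mem_powersetCard.1 hS).1
      rw [← Finset.sum_mul_sum, sq]
      congr 1 <;> rw [Finset.sum_ite_mem, Finset.inter_eq_right.2 hSp]
    have step2 : ∑ S ∈ p.powersetCard s, ∑ i ∈ p, ∑ j ∈ p,
            (if i ∈ S then z i else 0) * (if j ∈ S then z j else 0)
        = ∑ i ∈ p, ∑ j ∈ p,
            (((p.powersetCard s).filter (fun S => i ∈ S ∧ j ∈ S)).card : ℝ) * (z i * z j) := by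
      rw [Finset.sum_comm]
      refine Finset.sum_congr rfl fun i _ => ?_
      rw [Finset.sum_comm]
      refine Finset.sum_congr rfl fun j _ => ?_
      have hite : ∀ S : Finset ι, (if i ∈ S then z i else 0) * (if j ∈ S then z j else 0)
          = if i ∈ S ∧ j ∈ S then z i * z j else 0 := by
        intro S
        by_cases hi : i ∈ S <;> by_cases hj : j ∈ S <;> simp [hi, hj]
      simp_rw [hite]
      rw [← Finset.sum_filter, Finset.sum_const, nsmul_eq_mul]
    rw [step1, step2]
    have step3 : ∀ i ∈ p, ∑ j ∈ p,
        (((p.powersetCard s).filter (fun S => i ∈ S ∧ j ∈ S)).card : ℝ) * (z i * z j)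
        = (n1 : ℝ) * z i ^ 2 - (n2 : ℝ) * z i ^ 2 := by
      intro i hi
      rw [← Finset.add_sum_erase p _ hi, hc1 i hi]
      have herase : ∑ j ∈ p.erase i,
          (((p.powersetCard s).filter (fun S => i ∈ S ∧ j ∈ S)).card : ℝ) * (z i * z j)
          = (n2 : ℝ) * (z i * (0 - z i)) := by
        have hcong : ∀ j ∈ p.erase i,
            (((p.powersetCard s).filter (fun S => i ∈ S ∧ j ∈ S)).card : ℝ) * (z i * z j)
            = (n2 : ℝ) * (z i * z j) := fun j hj => by
          rw [hc2 i hi j (Finset.mem_of_mem_erase hj) (Finset.ne_of_mem_erase hj).symm]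
        rw [Finset.sum_congr rfl hcong]
        simp_rw [← Finset.mul_sum]
        rw [Finset.sum_erase_eq_sub hi, hsum]
      rw [herase]; ring
    rw [Finset.sum_congr rfl step3, Finset.sum_sub_distrib, ← Finset.mul_sum, ← Finset.mul_sum,
      ← hA]
    ring
  -- total sum
  have htotal : ∑ S ∈ p.powersetCard s, (A + (∑ l ∈ S, z l) ^ 2)
      = (P.choose s : ℝ) * A + ((n1 : ℝ) - n2) * A := by
    rw [Finset.sum_add_distrib, Finset.sum_const, Finset.card_powersetCard, hP,
      nsmul_eq_mul, key]
  -- choose identities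
  have hCpos : 0 < (P.choose s : ℝ) := by
    exact_mod_cast Nat.choose_pos hsP'
  have hPpos : (0 : ℝ) < P := by positivity
  have hP1pos : (0 : ℝ) < (P : ℝ) - 1 := by
    have : (2 : ℝ) ≤ P := by exact_mod_cast hP2
    linarith
  have e1 : P.choose s * s = P * n1 := by
    have h := Nat.add_one_mul_choose_eq (P - 1) (s - 1)
    rw [Nat.sub_add_cancel hP1, Nat.sub_add_cancel hs1] at h
    exact h.symm
  have e2 : P.choose s * s * (s - 1) = P * (P - 1) * n2 := by
    by_cases h2 : 2 ≤ s
    · have h := Nat.add_one_mul_choose_eq (P - 2) (s - 2)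
      have hp' : P - 2 + 1 = P - 1 := by omega
      have hs' : s - 2 + 1 = s - 1 := by omega
      rw [hp', hs'] at h
      -- h : (P - 1) * (P - 2).choose (s - 2) = (P - 1).choose (s - 1) * (s - 1)
      rw [hn2def, if_pos h2]
      calc P.choose s * s * (s - 1) = P * (n1 * (s - 1)) := by rw [e1]; ring
        _ = P * ((P - 1) * (P - 2).choose (s - 2)) := by rw [hn1def, ← h]
        _ = P * (P - 1) * (P - 2).choose (s - 2) := by ring
    · have hs' : s = 1 := by omega
      rw [hn2def, if_neg h2, hs']
      simp
  have r1 : (n1 : ℝ) = (P.choose s : ℝ) * s / P := by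
    rw [eq_div_iff hPpos.ne']
    have := congrArg (Nat.cast : ℕ → ℝ) e1
    push_cast at this
    linarith
  have r2 : (n2 : ℝ) = (P.choose s : ℝ) * s * ((s : ℝ) - 1) / ((P : ℝ) * ((P : ℝ) - 1)) := by
    rw [eq_div_iff (by positivity : ((P : ℝ) * ((P : ℝ) - 1)) ≠ 0)]
    have := congrArg (Nat.cast : ℕ → ℝ) e2
    push_cast [Nat.cast_sub hs1, Nat.cast_sub hP1] at this
    linarith
  constructor
  · apply le_of_eq
    rw [htotal, r1, r2]
    field_simp
  · have hx : 0 ≤ (s : ℝ) / P := by positivity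
    have hy : 0 ≤ ((s : ℝ) - 1) / ((P : ℝ) - 1) := by
      apply div_nonneg _ hP1pos.le
      have : (1 : ℝ) ≤ s := by exact_mod_cast hs1
      linarith
    nlinarith [mul_nonneg (mul_nonneg hx hy) hA0]
end
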